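/- Radial derivative of the angular integral of Im f. With Δ > 0, v > 0, T := tanh(Δ·π/(2v)), w(z) := 2z/(1+z²) and f(z) := (v/π)·Log((1 + T·w(z))/(1 − T·w(z))) for |z| < 1: for every ρ ∈ (0, 1), the function ρ ↦ ∫₀^{π/2} Im f(ρ·e^{iθ}) dθ is differentiable at ρ with derivative equal to Re(f(ρ))/ρ. (Here f(ρ) is real and f(i·ρ) is purely imaginary, reflecting that f is an odd analytic function with real Taylor coefficients.) -/

import Mathlib

/-!
Differentiating under the integral sign, `∂_ρ Im f(ρe^{iθ}) = Im (f'(ρe^{iθ}) e^{iθ})`, and by the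
Cauchy–Riemann equations in polar form this is `-(1/ρ) ∂_θ Re f(ρe^{iθ})`. Hence the derivative is
`(Re f(ρ) - Re f(iρ)) / ρ`. Finally `T w(iρ)` is purely imaginary, so `(1 + T w)/(1 - T w)` has
modulus one and `Re f(iρ) = 0`. The map `f` is holomorphic on the disc because `w(z)` is real only
for real `z`, where `|w(z)| < 1`; so the argument of `Log` never meets the negative real axis.
-/

open Complex Metric

section PolarCoordinates

variable {f : ℂ → ℂ}

lemma hasDerivAt_comp_ofReal_mul_exp_radial {s θ : ℝ}
    (hf : DifferentiableAt ℂ f (s * exp (θ * I))) :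
    HasDerivAt (fun s : ℝ => f (s * exp (θ * I))) (deriv f (s * exp (θ * I)) * exp (θ * I)) s := by
  have := hf.hasDerivAt.comp (s : ℂ) ((hasDerivAt_id (s : ℂ)).mul_const (exp (θ * I)))
  simpa using this.comp_ofReal

lemma hasDerivAt_comp_ofReal_mul_exp_angular {ρ θ : ℝ}
    (hf : DifferentiableAt ℂ f (ρ * exp (θ * I))) :
    HasDerivAt (fun θ : ℝ => f (ρ * exp (θ * I)))
      (deriv f (ρ * exp (θ * I)) * (ρ * exp (θ * I) * I)) θ := by
  rw [← circleMap_zero] at hf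
  simpa only [Function.comp_def, circleMap_zero] using
    hf.hasDerivAt.comp θ (hasDerivAt_circleMap 0 ρ θ)

lemma ofReal_mul_exp_mem_ball {s R : ℝ} (hs : |s| < R) (θ : ℝ) :
    (s : ℂ) * exp (θ * I) ∈ ball (0 : ℂ) R := by
  rwa [mem_ball_zero_iff, norm_mul, norm_real, Real.norm_eq_abs, norm_exp_ofReal_mul_I, mul_one]

lemma continuous_comp_ofReal_mul_exp {g : ℂ → ℂ} {R s : ℝ} (hg : ContinuousOn g (ball 0 R))
    (hs : |s| < R) : Continuous fun θ : ℝ => g (s * exp (θ * I)) :=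
  hg.comp_continuous (by fun_prop) (ofReal_mul_exp_mem_ball hs)

lemma hasDerivAt_integral_im_comp_ofReal_mul_exp {R ρ : ℝ} (hf : DifferentiableOn ℂ f (ball 0 R))
    (hρ : |ρ| < R) (a b : ℝ) :
    HasDerivAt (fun s : ℝ => ∫ θ in a..b, (f (s * exp (θ * I))).im)
      (∫ θ in a..b, (deriv f (ρ * exp (θ * I)) * exp (θ * I)).im) ρ := by
  have hf' : ContinuousOn (deriv f) (ball 0 R) :=
    (hf.analyticOnNhd isOpen_ball).deriv.continuousOn
  obtain ⟨r, hρr, hrR⟩ := exists_between hρ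
  obtain ⟨M, hM⟩ := (isCompact_closedBall (0 : ℂ) r).exists_bound_of_continuousOn
    (hf'.mono (closedBall_subset_ball hrR))
  have h_near : ∀ x ∈ ball ρ (r - |ρ|), |x| < r := fun x hx => by
    rw [mem_ball, Real.dist_eq] at hx
    linarith [abs_sub_abs_le_abs_sub x ρ]
  have h_lt : ∀ x ∈ ball ρ (r - |ρ|), |x| < R := fun x hx => (h_near x hx).trans hrR
  refine (intervalIntegral.hasDerivAt_integral_of_dominated_loc_of_deriv_le
    (F := fun (x θ : ℝ) => (f (x * exp (θ * I))).im)
    (F' := fun (x θ : ℝ) => (deriv f (x * exp (θ * I)) * exp (θ * I)).im)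
    (bound := fun _ => M) (ball_mem_nhds ρ (sub_pos.2 hρr)) ?_ ?_ ?_ ?_
    intervalIntegrable_const ?_).2
  · filter_upwards [ball_mem_nhds ρ (sub_pos.2 hρr)] with x hx
    exact (continuous_im.comp
      (continuous_comp_ofReal_mul_exp hf.continuousOn (h_lt x hx))).aestronglyMeasurable
  · exact (continuous_im.comp
      (continuous_comp_ofReal_mul_exp hf.continuousOn hρ)).intervalIntegrable _ _
  · exact (continuous_im.comp ((continuous_comp_ofReal_mul_exp hf' hρ).mul
      (by fun_prop))).aestronglyMeasurable
  · refine .of_forall fun θ _ x hx => ?_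
    calc ‖(deriv f (x * exp (θ * I)) * exp (θ * I)).im‖
        ≤ ‖deriv f (x * exp (θ * I)) * exp (θ * I)‖ := abs_im_le_norm _
      _ = ‖deriv f (x * exp (θ * I))‖ := by rw [norm_mul, norm_exp_ofReal_mul_I, mul_one]
      _ ≤ M := hM _ (ball_subset_closedBall (ofReal_mul_exp_mem_ball (h_near x hx) θ))
  · refine .of_forall fun θ _ x hx => ?_
    have hd := hasDerivAt_comp_ofReal_mul_exp_radial
      (hf.differentiableAt (isOpen_ball.mem_nhds (ofReal_mul_exp_mem_ball (h_lt x hx) θ)))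
    exact imCLM.hasFDerivAt.comp_hasDerivAt x hd

-- Cauchy–Riemann in polar form, `ρ ∂_ρ Im f = -∂_θ Re f`, makes the integrand an exact derivative.
lemma integral_im_deriv_mul_exp_eq {R ρ : ℝ} (hf : DifferentiableOn ℂ f (ball 0 R))
    (hρ : |ρ| < R) (hρ0 : ρ ≠ 0) (a b : ℝ) :
    ∫ θ in a..b, (deriv f (ρ * exp (θ * I)) * exp (θ * I)).im
      = ((f (ρ * exp (a * I))).re - (f (ρ * exp (b * I))).re) / ρ := by
  have hderiv : ∀ θ ∈ Set.uIcc a b, HasDerivAt (fun θ : ℝ => -(f (ρ * exp (θ * I))).re / ρ)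
      (deriv f (ρ * exp (θ * I)) * exp (θ * I)).im θ := fun θ _ => by
    have hd := reCLM.hasFDerivAt.comp_hasDerivAt θ (hasDerivAt_comp_ofReal_mul_exp_angular
      (hf.differentiableAt (isOpen_ball.mem_nhds (ofReal_mul_exp_mem_ball hρ θ))))
    set w := deriv f (ρ * exp (θ * I))
    have hre : (w * (ρ * exp (θ * I) * I)).re = -(ρ * (w * exp (θ * I)).im) := by
      rw [show w * (ρ * exp (θ * I) * I) = ρ * (w * exp (θ * I) * I) by ring, re_ofReal_mul,
        mul_I_re, mul_neg]
    have := hd.neg.div_const ρ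
    rwa [reCLM_apply, hre, neg_neg, mul_div_cancel_left₀ _ hρ0] at this
  have hint : IntervalIntegrable (fun θ : ℝ => (deriv f (ρ * exp (θ * I)) * exp (θ * I)).im)
      MeasureTheory.volume a b :=
    (continuous_im.comp ((continuous_comp_ofReal_mul_exp
      (hf.analyticOnNhd isOpen_ball).deriv.continuousOn hρ).mul
      (by fun_prop))).intervalIntegrable _ _
  rw [intervalIntegral.integral_eq_sub_of_hasDerivAt hderiv hint]
  ring

end PolarCoordinates

lemma one_add_sq_ne_zero_of_norm_lt_one {z : ℂ} (hz : ‖z‖ < 1) : 1 + z ^ 2 ≠ 0 := by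
  intro h
  have : ‖z‖ ^ 2 = 1 := by rw [← norm_pow, eq_neg_of_add_eq_zero_right h, norm_neg, norm_one]
  nlinarith [norm_nonneg z]

lemma im_eq_zero_of_im_two_mul_div_one_add_sq_eq_zero {z : ℂ} (hz : ‖z‖ < 1)
    (h : (2 * z / (1 + z ^ 2)).im = 0) : z.im = 0 := by
  have hn : z.re * z.re + z.im * z.im < 1 := by
    rw [← normSq_apply, ← Complex.sq_norm]; nlinarith [norm_nonneg z]
  have hden : normSq (1 + z ^ 2) ≠ 0 :=
    normSq_eq_zero.not.2 (one_add_sq_ne_zero_of_norm_lt_one hz)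
  rw [div_im, ← sub_div, div_eq_zero_iff, or_iff_left hden] at h
  simp only [mul_re, mul_im, add_re, add_im, pow_two, re_ofNat, im_ofNat, one_re, one_im] at h
  have : z.im * (1 - z.re * z.re - z.im * z.im) = 0 := by linear_combination h / 2
  exact (mul_eq_zero.1 this).resolve_right (by nlinarith)

lemma norm_two_mul_div_one_add_sq_lt_one_of_im_eq_zero {z : ℂ} (hz : ‖z‖ < 1)
    (h : (2 * z / (1 + z ^ 2)).im = 0) : ‖2 * z / (1 + z ^ 2)‖ < 1 := by
  obtain ⟨x, rfl⟩ : ∃ x : ℝ, (x : ℂ) = z :=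
    ⟨z.re, ext rfl (im_eq_zero_of_im_two_mul_div_one_add_sq_eq_zero hz h).symm⟩
  rw [norm_real, Real.norm_eq_abs] at hz
  rw [show 2 * (x : ℂ) / (1 + x ^ 2) = ((2 * x / (1 + x ^ 2) : ℝ) : ℂ) by push_cast; rfl,
    norm_real, Real.norm_eq_abs, abs_div, abs_of_pos (by positivity : (0 : ℝ) < 1 + x ^ 2),
    div_lt_one (by positivity), abs_mul, abs_two]
  nlinarith [abs_nonneg x, sq_abs x]

lemma one_add_div_one_sub_mem_slitPlane {u : ℂ} (hu : u.im = 0 → ‖u‖ < 1) :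
    (1 + u) / (1 - u) ∈ slitPlane := by
  by_cases h : u.im = 0
  · obtain ⟨x, rfl⟩ : ∃ x : ℝ, (x : ℂ) = u := ⟨u.re, ext rfl h.symm⟩
    have hx := hu h
    rw [norm_real, Real.norm_eq_abs, abs_lt] at hx
    rw [show (1 + (x : ℂ)) / (1 - x) = ((1 + x) / (1 - x) : ℝ) by push_cast; rfl]
    exact ofReal_mem_slitPlane.2 (div_pos (by linarith) (by linarith))
  · have hne : normSq (1 - u) ≠ 0 := normSq_eq_zero.not.2 fun h0 => h (by
      simpa using congrArg im h0)
    refine mem_slitPlane_iff.2 (Or.inr ?_)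
    rw [div_im, ← sub_div]
    refine div_ne_zero ?_ hne
    simp only [add_im, sub_im, add_re, sub_re, one_im, one_re]
    intro h2; apply h; linarith

lemma differentiableOn_log_one_add_mul_div_one_sub_mul (c T : ℝ) (hT : |T| ≤ 1) :
    DifferentiableOn ℂ (fun z => (c : ℂ) *
      log ((1 + (T : ℂ) * (2 * z / (1 + z ^ 2))) / (1 - (T : ℂ) * (2 * z / (1 + z ^ 2)))))
      (ball 0 1) := by
  intro z hz
  rw [mem_ball_zero_iff] at hz
  have hw := one_add_sq_ne_zero_of_norm_lt_one hz
  have hslit : (1 + (T : ℂ) * (2 * z / (1 + z ^ 2))) / (1 - (T : ℂ) * (2 * z / (1 + z ^ 2)))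
      ∈ slitPlane := by
    refine one_add_div_one_sub_mem_slitPlane fun h => ?_
    rw [im_ofReal_mul, mul_eq_zero] at h
    rw [norm_mul, norm_real, Real.norm_eq_abs]
    rcases h with hT0 | hw0
    · simp [hT0]
    · exact mul_lt_one_of_nonneg_of_lt_one_right hT (norm_nonneg _)
        (norm_two_mul_div_one_add_sq_lt_one_of_im_eq_zero hz hw0)
  have hden := (div_ne_zero_iff.1 (slitPlane_ne_zero hslit)).2
  fun_prop (disch := assumption)

lemma re_two_mul_div_one_add_sq_eq_zero {z : ℂ} (hz : z.re = 0) :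
    (2 * z / (1 + z ^ 2)).re = 0 := by
  simp [div_re, pow_two, hz]

lemma re_log_one_add_div_one_sub_eq_zero {u : ℂ} (hu : u.re = 0) :
    (log ((1 + u) / (1 - u))).re = 0 := by
  have h : ‖1 + u‖ = ‖1 - u‖ := by
    rw [← sq_eq_sq₀ (norm_nonneg _) (norm_nonneg _), Complex.sq_norm, Complex.sq_norm,
      normSq_apply, normSq_apply]
    simp [hu]
  rw [log_re, norm_div, h]
  rcases eq_or_ne ‖1 - u‖ 0 with h0 | h0 <;> simp [h0]

theorem deriv_angular_integral_im_conformal_map_general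
    (Δ v : ℝ) (ρ : ℝ) (hρ0 : 0 < ρ) (hρ1 : ρ < 1) :
    let f : ℂ → ℂ := fun w =>
      ((v / Real.pi : ℝ) : ℂ) *
        Complex.log
          ((1 + ((Real.tanh (Δ * Real.pi / (2 * v)) : ℝ) : ℂ) * (2 * w / (1 + w ^ 2))) /
           (1 - ((Real.tanh (Δ * Real.pi / (2 * v)) : ℝ) : ℂ) * (2 * w / (1 + w ^ 2))))
    HasDerivAt
      (fun s : ℝ => ∫ θ in (0:ℝ)..(Real.pi / 2),
        (f ((s : ℂ) * Complex.exp (θ * Complex.I))).im)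
      ((f (ρ : ℂ)).re / ρ) ρ := by
  intro f
  have hf : DifferentiableOn ℂ f (ball 0 1) :=
    differentiableOn_log_one_add_mul_div_one_sub_mul _ _ (Real.abs_tanh_lt_one _).le
  have hρ : |ρ| < 1 := by rwa [abs_of_pos hρ0]
  have hf_I : (f (ρ * I)).re = 0 := by
    rw [re_ofReal_mul, re_log_one_add_div_one_sub_eq_zero, mul_zero]
    rw [re_ofReal_mul, re_two_mul_div_one_add_sq_eq_zero (by simp), mul_zero]
  have h := hasDerivAt_integral_im_comp_ofReal_mul_exp hf hρ 0 (Real.pi / 2)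
  rw [integral_im_deriv_mul_exp_eq hf hρ hρ0.ne'] at h
  simpa [exp_pi_div_two_mul_I, hf_I] using h

/-- Radial derivative of the angular integral of `Im f` for the conformal map
`f(z) = (v/π) Log((1 + T w(z))/(1 - T w(z)))`, `T = tanh(Δπ/(2v))`, `w(z) = 2z/(1+z²)`:
for `ρ ∈ (0,1)`, `d/dρ ∫₀^{π/2} Im f(ρ e^{iθ}) dθ = Re f(ρ) / ρ`. -/
theorem deriv_angular_integral_im_conformal_map
    (Δ v : ℝ) (hΔ : 0 < Δ) (hv : 0 < v) (ρ : ℝ) (hρ0 : 0 < ρ) (hρ1 : ρ < 1) :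
    let f : ℂ → ℂ := fun w =>
      ((v / Real.pi : ℝ) : ℂ) *
        Complex.log
          ((1 + ((Real.tanh (Δ * Real.pi / (2 * v)) : ℝ) : ℂ) * (2 * w / (1 + w ^ 2))) /
           (1 - ((Real.tanh (Δ * Real.pi / (2 * v)) : ℝ) : ℂ) * (2 * w / (1 + w ^ 2))))
    HasDerivAt
      (fun s : ℝ => ∫ θ in (0:ℝ)..(Real.pi / 2),
        (f ((s : ℂ) * Complex.exp (θ * Complex.I))).im)
      ((f (ρ : ℂ)).re / ρ) ρ :=
  deriv_angular_integral_im_conformal_map_general Δ v ρ hρ0 hρ1
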